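/- arXiv:2206.07590 — 2 statements merged into one kernel-verified Lean document; each statement's English description precedes it below -/
import Mathlib

section
/- For every integer m ≥ 0 and every x, x · Σ_{k=0}^{m} C(2m+1, 2k+1) (-1)^k P_{2m-2k}(x) − Σ_{k=0}^{m} C(2m+1, 2k) (-1)^k P_{2m-2k+1}(x) = (-1)^{m+1}, where C(m,j) denotes the binomial coefficient. -/
open Polynomial Finset

/-- The derivative polynomials for tangent: `P 0 = X`,
`P (n+1) = (1 + X^2) * (P n)'`. -/
noncomputable def P : ℕ → Polynomial ℚ
  | 0 => X
  | n + 1 => (1 + X ^ 2) * derivative (P n)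

/-- The derivative polynomials for secant: `Q 0 = 1`,
`Q (n+1) = (1 + X^2) * (Q n)' + X * Q n`. -/
noncomputable def Q : ℕ → Polynomial ℚ
  | 0 => 1
  | n + 1 => (1 + X ^ 2) * derivative (Q n) + X * Q n


/-!
With `D = (1 + X²) d/dX` we have `P n = Dⁿ X`, so for a scalar `a` the binomial theorem gives
`∑ C(n,k) aᵏ P (n-k) = (a + D)ⁿ X`. When `a² = -1` this equals `(X + a) Q n - aⁿ⁺¹`, by induction
on `n` from the recurrence for `Q`. Take `a = i`, `n = 2m + 1` and evaluate at a rational `x`: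
the imaginary part identifies the sum over odd `k` with `Q n (x)`, the real part the sum over
even `k` with `x Q n (x) - (-1)ᵐ⁺¹`.
-/

noncomputable def tanOp (A : Type*) [CommRing A] : Module.End A A[X] :=
  LinearMap.mulLeft A (1 + X ^ 2) ∘ₗ derivative

lemma Finset.sum_range_two_mul {M : Type*} [AddCommMonoid M] (f : ℕ → M) (n : ℕ) :
    ∑ j ∈ range (2 * n), f j = ∑ k ∈ range n, f (2 * k) + ∑ k ∈ range n, f (2 * k + 1) := by
  induction n with
  | zero => simp
  | succ n ih =>
    rw [mul_add_one, sum_range_succ, sum_range_succ, ih, sum_range_succ, sum_range_succ]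
    abel

lemma Complex.ratCast_add_ratCast_mul_I_inj {a b c d : ℚ}
    (h : (a : ℂ) + b * I = c + d * I) : a = c ∧ b = d := by
  simpa [Complex.ext_iff] using h

lemma sum_range_choose_mul_I_pow (m : ℕ) (f : ℕ → ℚ) :
    ∑ k ∈ range (2 * m + 1 + 1), ((2 * m + 1).choose k : ℂ) * Complex.I ^ k * f (2 * m + 1 - k) =
      ((∑ k ∈ range (m + 1), ((2 * m + 1).choose (2 * k) : ℚ) * (-1) ^ k * f (2 * m - 2 * k + 1) :
          ℚ) : ℂ) +
        ((∑ k ∈ range (m + 1), ((2 * m + 1).choose (2 * k + 1) : ℚ) * (-1) ^ k * f (2 * m - 2 * k) :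
          ℚ) : ℂ) * Complex.I := by
  rw [show 2 * m + 1 + 1 = 2 * (m + 1) by ring, sum_range_two_mul]
  push_cast [sum_mul]
  congr 1 <;> refine sum_congr rfl fun k hk => ?_
  · rw [Nat.sub_add_comm (by grind), pow_mul, Complex.I_sq]
  · rw [pow_succ, pow_mul, Complex.I_sq]
    ring

section
variable {A : Type*} [CommRing A]

lemma tanOp_apply (f : A[X]) : tanOp A f = (1 + X ^ 2) * derivative f := rfl

variable [Algebra ℚ A]

lemma map_P_eq_tanOp_pow (n : ℕ) : (P n).map (algebraMap ℚ A) = (tanOp A ^ n) X := by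
  induction n with
  | zero => simp [P]
  | succ n ih =>
    rw [pow_succ', Module.End.mul_apply, ← ih, tanOp_apply, P, Polynomial.map_mul, derivative_map]
    simp

lemma map_Q_succ (n : ℕ) : (Q (n + 1)).map (algebraMap ℚ A) =
    tanOp A ((Q n).map (algebraMap ℚ A)) + X * (Q n).map (algebraMap ℚ A) := by
  simp [Q, tanOp_apply, derivative_map]

lemma smul_one_add_tanOp_pow_X_eq_sum (a : A) (n : ℕ) :
    ((a • 1 + tanOp A) ^ n) X =
      ∑ k ∈ range (n + 1), (n.choose k * a ^ k) • (P (n - k)).map (algebraMap ℚ A) := by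
  rw [(Commute.smul_left (Commute.one_left (tanOp A)) a).add_pow, LinearMap.sum_apply]
  refine sum_congr rfl fun k _ => ?_
  simp only [Module.End.mul_apply, Module.End.natCast_apply, map_nsmul, _root_.smul_pow, one_pow,
    LinearMap.smul_apply, Module.End.one_apply, map_P_eq_tanOp_pow]
  rw [← Nat.cast_smul_eq_nsmul A, mul_smul, smul_comm]

lemma smul_one_add_tanOp_pow_X_eq (a : A) (ha : a ^ 2 = -1) (n : ℕ) :
    ((a • 1 + tanOp A) ^ n) X =
      (X + C a) * (Q n).map (algebraMap ℚ A) - C (a ^ (n + 1)) := by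
  induction n with
  | zero => simp [Q]
  | succ n ih =>
    have hC : C a * C a = -1 := by rw [← C_mul, ← sq, ha, C_neg, C_1]
    rw [pow_succ', Module.End.mul_apply, ih, map_Q_succ]
    simp only [LinearMap.add_apply, LinearMap.smul_apply, Module.End.one_apply, tanOp_apply,
      smul_eq_C_mul, derivative_sub, derivative_mul, derivative_add, derivative_X, derivative_C,
      pow_succ, C_mul]
    linear_combination (Q n).map (algebraMap ℚ A) * hC

lemma sum_choose_mul_pow_mul_aeval_P (a x : A) (ha : a ^ 2 = -1) (n : ℕ) :
    ∑ k ∈ range (n + 1), n.choose k * a ^ k * aeval x (P (n - k)) =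
      (x + a) * aeval x (Q n) - a ^ (n + 1) := by
  simpa [eval_finsetSum, smul_one_add_tanOp_pow_X_eq_sum] using
    congrArg (eval x) (smul_one_add_tanOp_pow_X_eq a ha n)

end

theorem P_odd_alternating_identity (m : ℕ) (x : ℚ) :
    x * (∑ k ∈ Finset.range (m + 1),
        ((2 * m + 1).choose (2 * k + 1) : ℚ) * (-1) ^ k * (P (2 * m - 2 * k)).eval x) -
      (∑ k ∈ Finset.range (m + 1),
        ((2 * m + 1).choose (2 * k) : ℚ) * (-1) ^ k * (P (2 * m - 2 * k + 1)).eval x) =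
    (-1) ^ (m + 1) := by
  have hcast (p : ℚ[X]) : aeval (x : ℂ) p = ((p.eval x : ℚ) : ℂ) := by
    simpa using aeval_algebraMap_apply_eq_algebraMap_eval (A := ℂ) x p
  have h := sum_choose_mul_pow_mul_aeval_P Complex.I (x : ℂ) Complex.I_sq (2 * m + 1)
  simp only [hcast] at h
  rw [sum_range_choose_mul_I_pow m fun j => (P j).eval x] at h
  set q := (Q (2 * m + 1)).eval x
  have hrhs : ((x : ℂ) + Complex.I) * q - Complex.I ^ (2 * m + 1 + 1) =
      ((x * q - (-1) ^ (m + 1) : ℚ) : ℂ) + (q : ℂ) * Complex.I := by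
    rw [show 2 * m + 1 + 1 = 2 * (m + 1) by ring, pow_mul, Complex.I_sq]
    push_cast
    ring
  obtain ⟨hre, him⟩ := Complex.ratCast_add_ratCast_mul_I_inj (h.trans hrhs)
  rw [him, hre]
  ring
end

section
/- For every integer n ≥ 0, (2n+2) · 2^{2n+1} · E_{2n+1} = s_{2n+2} + Σ_{i=0}^{n} C(2n+2, 2i+2) (-1)^{i+2} (4^{i+1} − 2) B_{2i+2} s_{2n-2i} − (-4)^{n+1} B_{2n+2}, where C(m,j) denotes the binomial coefficient and B_j denotes the j-th Bernoulli number. -/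
open Polynomial Finset

/-- The Euler numbers: `E (2j) = Q (2j) (0)` (secant numbers) and
`E (2j+1) = P (2j+1) (0)` (tangent numbers). -/
noncomputable def E (n : ℕ) : ℚ := if Even n then (Q n).eval 0 else (P n).eval 0

/-- The Springer numbers `s n = Q n (1)`. -/
noncomputable def s (n : ℕ) : ℚ := (Q n).eval 1

/-!
`P n` and `Q n` are the iterates on `X` and on `1` of `D = (1 + X²) d/dX` and of `D + X`, which
satisfy Leibniz rules, so the recurrences become binomial convolutions: the exponential generating
functions `t` of `P n (0)` and `σ` of `Q n (0)` (the series of `tan x` and `sec x`) satisfy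
`t' = 1 + t²` and `σ' = σ t`, and those of `P n (a)`, `Q n (a)` satisfy the same equations with
initial values `a` and `1`. Uniqueness for the linear equation `F' = G F` then identifies the
Springer series as `S = σ / (1 - t)`, so `S(x) + S(-x) = 2σ / (1 - t²)`. Together with
`σ² = 1 + t²`, `tan 2x = 2t / (1 - t²)`, `x cot x = x / t` and `x csc x = x σ / t` this gives
`2x tan 2x = (S(x) + S(-x)) · x csc x - 2 x cot x`, and the theorem is the coefficient of
`x^(2n+2)` of this identity, because `x cot x = B(2ix) + ix` and `x csc x = 2B(ix) - B(2ix)` for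
`B(z) = z / (e^z - 1)`. The trigonometric identities are checked in `ℂ⟦X⟧` through `e^{ix}`.
-/

open scoped Nat PowerSeries

theorem iterate_map_mul_eq_sum_antidiagonal {R : Type*} [CommSemiring R] (L : R →+ R)
    (D : R → R) (hL : ∀ f g, L (f * g) = L f * g + f * D g) (n : ℕ) (f g : R) :
    L^[n] (f * g) = ∑ ij ∈ antidiagonal n, n.choose ij.1 • (L^[ij.1] f * D^[ij.2] g) := by
  induction n with
  | zero => simp
  | succ n ih =>
    rw [sum_antidiagonal_choose_succ_nsmul (fun i j => L^[i] f * D^[j] g) n]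
    simp only [Function.iterate_succ_apply', ih, map_sum, map_nsmul, hL, smul_add,
      sum_add_distrib]
    rw [add_comm]
    congr 1
    refine sum_congr rfl fun ⟨i, j⟩ hij ↦ ?_
    rw [n.choose_symm_of_eq_add (mem_antidiagonal.1 hij).symm]

noncomputable def tanDeriv : ℚ[X] →+ ℚ[X] :=
  (AddMonoidHom.mulLeft (1 + X ^ 2)).comp derivative.toAddMonoidHom

noncomputable def secDeriv : ℚ[X] →+ ℚ[X] := tanDeriv + AddMonoidHom.mulLeft X

theorem P_eq_iterate (n : ℕ) : P n = tanDeriv^[n] X := by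
  induction n with
  | zero => rfl
  | succ n ih => rw [Function.iterate_succ_apply', ← ih]; rfl

theorem Q_eq_iterate (n : ℕ) : Q n = secDeriv^[n] 1 := by
  induction n with
  | zero => rfl
  | succ n ih => rw [Function.iterate_succ_apply', ← ih]; rfl

theorem tanDeriv_mul (f g : ℚ[X]) : tanDeriv (f * g) = tanDeriv f * g + f * tanDeriv g := by
  simp only [tanDeriv, AddMonoidHom.coe_comp, Function.comp_apply, AddMonoidHom.coe_mulLeft,
    LinearMap.toAddMonoidHom_coe, derivative_mul]
  ring

theorem secDeriv_mul (f g : ℚ[X]) : secDeriv (f * g) = secDeriv f * g + f * tanDeriv g := by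
  simp only [secDeriv, AddMonoidHom.add_apply, tanDeriv_mul, AddMonoidHom.coe_mulLeft]
  ring

theorem P_succ_eq_sum_antidiagonal (n : ℕ) :
    P (n + 1) = (if n = 0 then 1 else 0) +
      ∑ ij ∈ antidiagonal n, n.choose ij.1 • (P ij.1 * P ij.2) := by
  have hP1 : P 1 = 1 + X * X := by
    show (1 + X ^ 2) * derivative X = _
    rw [derivative_X]
    ring
  have hconst : tanDeriv^[n] 1 = if n = 0 then 1 else 0 := by
    rcases n with _ | n
    · rfl
    · rw [Function.iterate_succ_apply, show tanDeriv 1 = 0 by simp [tanDeriv], iterate_map_zero,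
        if_neg n.succ_ne_zero]
  have hP : P (n + 1) = tanDeriv^[n] (P 1) := by
    rw [P_eq_iterate, P_eq_iterate 1, ← Function.iterate_add_apply]
  rw [hP, hP1, iterate_map_add, hconst, iterate_map_mul_eq_sum_antidiagonal _ _ tanDeriv_mul]
  simp only [P_eq_iterate]

theorem Q_succ_eq_sum_antidiagonal (n : ℕ) :
    Q (n + 1) = ∑ ij ∈ antidiagonal n, n.choose ij.1 • (Q ij.1 * P ij.2) := by
  have hsec : secDeriv 1 = 1 * X := by simp [secDeriv, tanDeriv]
  rw [Q_eq_iterate, Function.iterate_succ_apply, hsec,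
    iterate_map_mul_eq_sum_antidiagonal _ _ secDeriv_mul]
  simp only [P_eq_iterate, Q_eq_iterate]

namespace PowerSeries

section EGF

variable {A : Type*} [CommRing A] [Algebra ℚ A]

noncomputable def egf (u : ℕ → A) : A⟦X⟧ := mk fun n => (n ! : ℚ)⁻¹ • u n

theorem coeff_egf (u : ℕ → A) (n : ℕ) : coeff n (egf u) = (n ! : ℚ)⁻¹ • u n := coeff_mk _ _

theorem constantCoeff_egf (u : ℕ → A) : constantCoeff (egf u) = u 0 := by
  simp [← coeff_zero_eq_constantCoeff_apply, coeff_egf]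

theorem egf_add (u v : ℕ → A) : egf (u + v) = egf u + egf v := by
  ext n; simp [coeff_egf]

theorem derivative_egf (u : ℕ → A) : d⁄dX A (egf u) = egf fun n => u (n + 1) := by
  ext n
  rw [coeff_derivative, coeff_egf, coeff_egf, ← Nat.cast_succ, mul_comm, ← nsmul_eq_mul,
    ← Nat.cast_smul_eq_nsmul ℚ, smul_smul, Nat.factorial_succ]
  congr 1
  push_cast
  field_simp

theorem egf_mul (u v : ℕ → A) :
    egf u * egf v = egf fun n => ∑ ij ∈ antidiagonal n, n.choose ij.1 • (u ij.1 * v ij.2) := by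
  ext n
  rw [coeff_mul, coeff_egf, smul_sum]
  refine sum_congr rfl fun ⟨i, j⟩ hij => ?_
  rw [HasAntidiagonal.mem_antidiagonal] at hij
  subst hij
  rw [coeff_egf, coeff_egf, smul_mul_smul_comm, ← Nat.cast_smul_eq_nsmul ℚ, smul_smul,
    Nat.cast_add_choose]
  congr 1
  field_simp

theorem rescale_egf (c : A) (u : ℕ → A) : rescale c (egf u) = egf fun n => c ^ n * u n := by
  ext n
  rw [coeff_rescale, coeff_egf, coeff_egf, mul_smul_comm]

theorem X_mul_egf (u : ℕ → A) : X * egf u = egf fun n => n * u (n - 1) := by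
  ext n
  rcases n with _ | n
  · simp [coeff_egf]
  · rw [coeff_succ_X_mul, coeff_egf, coeff_egf, Nat.add_sub_cancel, ← nsmul_eq_mul,
      ← Nat.cast_smul_eq_nsmul ℚ, smul_smul, Nat.factorial_succ]
    congr 1
    push_cast
    field_simp

theorem exp_eq_egf : exp A = egf 1 := by
  ext n
  rw [coeff_exp, coeff_egf, Pi.one_apply, Algebra.algebraMap_eq_smul_one, one_div]

theorem bernoulliPowerSeries_eq_egf :
    bernoulliPowerSeries A = egf fun n => algebraMap ℚ A (bernoulli n) := by
  ext n
  rw [bernoulliPowerSeries, coeff_mk, coeff_egf, Algebra.smul_def, ← map_mul, inv_mul_eq_div]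

theorem derivative_rescale_exp (c : A) :
    d⁄dX A (rescale c (exp A)) = C c * rescale c (exp A) := by
  ext n
  simp [exp_eq_egf, rescale_egf, derivative_egf, coeff_egf, pow_succ, mul_comm]

theorem eq_zero_of_derivative_eq_mul {F G : A⟦X⟧} (hF : d⁄dX A F = G * F)
    (h0 : constantCoeff F = 0) : F = 0 := by
  ext n
  induction n using Nat.strong_induction_on with
  | _ n ih =>
    rcases n with _ | m
    · simpa using h0
    · have hc := congrArg (coeff m) hF
      rw [coeff_derivative, coeff_mul, sum_eq_zero fun ij hij => ?_] at hc
      · have hunit : IsUnit ((m : A) + 1) := by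
          simpa using (IsUnit.mk0 ((m : ℚ) + 1) (by positivity)).map (algebraMap ℚ A)
        simpa [hunit.mul_left_eq_zero] using hc
      · rw [ih ij.2 (by have := HasAntidiagonal.mem_antidiagonal.mp hij; omega), map_zero,
          mul_zero]

end EGF

theorem rescale_C {R : Type*} [CommSemiring R] (a c : R) : rescale a (C c) = C c := by
  ext n
  rcases n with _ | n <;> simp [coeff_C]

/-- The exponential generating function of `P n (a)`, i.e. the series of `tan (x + arctan a)`. -/
noncomputable def tangentEGF (a : ℚ) : ℂ⟦X⟧ := egf fun n => (((P n).eval a : ℚ) : ℂ)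

/-- The exponential generating function of `Q n (a)`, i.e. the series of
`sec x / (1 - a tan x)`. -/
noncomputable def secantEGF (a : ℚ) : ℂ⟦X⟧ := egf fun n => (((Q n).eval a : ℚ) : ℂ)

theorem derivative_tangentEGF (a : ℚ) : d⁄dX ℂ (tangentEGF a) = 1 + tangentEGF a ^ 2 := by
  rw [tangentEGF, derivative_egf, sq, egf_mul]
  ext n
  rcases n with _ | n <;>
    simp [coeff_egf, constantCoeff_egf, P_succ_eq_sum_antidiagonal, eval_finsetSum]

theorem derivative_secantEGF (a : ℚ) :
    d⁄dX ℂ (secantEGF a) = secantEGF a * tangentEGF a := by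
  rw [secantEGF, tangentEGF, derivative_egf, egf_mul]
  simp [Q_succ_eq_sum_antidiagonal, eval_finsetSum]

theorem constantCoeff_tangentEGF (a : ℚ) : constantCoeff (tangentEGF a) = a := by
  simp [tangentEGF, constantCoeff_egf, P]

theorem constantCoeff_secantEGF (a : ℚ) : constantCoeff (secantEGF a) = 1 := by
  simp [secantEGF, constantCoeff_egf, Q]

theorem tangentEGF_zero_ne_zero : tangentEGF 0 ≠ 0 :=
  ne_of_apply_ne (coeff 1) (by simp [tangentEGF, coeff_egf, P])

theorem tangentEGF_mul_one_sub (a : ℚ) :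
    tangentEGF a * (1 - C (a : ℂ) * tangentEGF 0) = tangentEGF 0 + C (a : ℂ) := by
  have h := eq_zero_of_derivative_eq_mul
    (F := tangentEGF a * (1 - C (a : ℂ) * tangentEGF 0) - (tangentEGF 0 + C (a : ℂ)))
    (G := tangentEGF a + tangentEGF 0) ?_ ?_
  · linear_combination h
  · simp only [map_sub, map_add, Derivation.leibniz, smul_eq_mul, derivative_tangentEGF,
      derivative_C, Derivation.map_one_eq_zero]
    ring
  · simp [constantCoeff_tangentEGF]

theorem secantEGF_mul_one_sub (a : ℚ) :
    secantEGF a * (1 - C (a : ℂ) * tangentEGF 0) = secantEGF 0 := by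
  have h := eq_zero_of_derivative_eq_mul
    (F := secantEGF a * (1 - C (a : ℂ) * tangentEGF 0) - secantEGF 0)
    (G := tangentEGF 0) ?_ ?_
  · linear_combination h
  · simp only [map_sub, Derivation.leibniz, smul_eq_mul, derivative_tangentEGF,
      derivative_secantEGF, derivative_C, Derivation.map_one_eq_zero]
    linear_combination secantEGF a * tangentEGF_mul_one_sub a
  · simp [constantCoeff_secantEGF, constantCoeff_tangentEGF]

theorem secantEGF_add_rescale_neg_one (a : ℚ) :
    secantEGF a + rescale (-1) (secantEGF a) =
      egf fun k => (1 + (-1) ^ k) * (((Q k).eval a : ℚ) : ℂ) := by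
  rw [secantEGF, rescale_egf, ← egf_add]
  congr 1
  funext k
  simp only [Pi.add_apply]
  ring

local notation "ι" => C Complex.I

theorem C_I_mul_C_I : ι * ι = -1 := by
  rw [← map_mul, Complex.I_mul_I, map_neg, map_one]

noncomputable def expI : ℂ⟦X⟧ := rescale Complex.I (exp ℂ)

theorem derivative_expI : d⁄dX ℂ expI = ι * expI := derivative_rescale_exp _

theorem constantCoeff_expI : constantCoeff expI = 1 := by
  simp [expI, ← coeff_zero_eq_constantCoeff_apply]

theorem expI_sq : expI ^ 2 = rescale (2 * Complex.I) (exp ℂ) := by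
  rw [expI, sq, exp_mul_exp_eq_exp_add, ← two_mul]

theorem rescale_two_expI : rescale 2 expI = expI ^ 2 := by
  rw [expI_sq, expI, rescale_rescale, mul_comm]

theorem rescale_neg_one_expI_mul_expI : rescale (-1) expI * expI = 1 := by
  rw [expI, rescale_rescale, exp_mul_exp_eq_exp_add, mul_neg_one, neg_add_cancel,
    rescale_zero_apply, constantCoeff_exp, map_one]

theorem C_I_mul_expI_sq_add_one_ne_zero : ι * (expI ^ 2 + 1) ≠ 0 :=
  ne_of_apply_ne constantCoeff (by simp [constantCoeff_expI])

theorem C_I_mul_tangentEGF_zero_mul : ι * tangentEGF 0 * (expI ^ 2 + 1) = expI ^ 2 - 1 := by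
  have h := eq_zero_of_derivative_eq_mul
    (F := ι * tangentEGF 0 * (expI ^ 2 + 1) - (expI ^ 2 - 1)) (G := tangentEGF 0 + ι) ?_ ?_
  · linear_combination h
  · simp only [map_sub, map_add, Derivation.leibniz, Derivation.leibniz_pow, smul_eq_mul,
      nsmul_eq_mul, derivative_tangentEGF, derivative_expI, derivative_C,
      Derivation.map_one_eq_zero]
    linear_combination tangentEGF 0 * (expI ^ 2 - 1) * C_I_mul_C_I
  · simp [constantCoeff_tangentEGF, constantCoeff_expI]

theorem secantEGF_zero_mul : secantEGF 0 * (expI ^ 2 + 1) = 2 * expI := by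
  have h := eq_zero_of_derivative_eq_mul
    (F := secantEGF 0 * (expI ^ 2 + 1) - 2 * expI) (G := ι) ?_ ?_
  · linear_combination h
  · have h2 : d⁄dX ℂ (2 : ℂ⟦X⟧) = 0 := by exact_mod_cast Derivation.map_natCast _ 2
    simp only [h2, map_sub, map_add, Derivation.leibniz, Derivation.leibniz_pow, smul_eq_mul,
      nsmul_eq_mul, derivative_secantEGF, derivative_expI, Derivation.map_one_eq_zero]
    linear_combination (-ι * secantEGF 0) * C_I_mul_tangentEGF_zero_mul +
      secantEGF 0 * tangentEGF 0 * (expI ^ 2 + 1) * C_I_mul_C_I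
  · simp [constantCoeff_secantEGF, constantCoeff_expI, map_ofNat, one_add_one_eq_two]

theorem rescale_neg_one_tangentEGF_zero : rescale (-1) (tangentEGF 0) = -tangentEGF 0 := by
  have h := congrArg (rescale (-1 : ℂ)) C_I_mul_tangentEGF_zero_mul
  simp only [map_mul, map_add, map_sub, map_pow, map_one, rescale_C] at h
  apply mul_right_cancel₀ C_I_mul_expI_sq_add_one_ne_zero
  linear_combination expI ^ 2 * h + C_I_mul_tangentEGF_zero_mul -
    (ι * rescale (-1) (tangentEGF 0) - 1) * (rescale (-1) expI * expI + 1) *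
      rescale_neg_one_expI_mul_expI

theorem rescale_neg_one_secantEGF_zero : rescale (-1) (secantEGF 0) = secantEGF 0 := by
  have h := congrArg (rescale (-1 : ℂ)) secantEGF_zero_mul
  simp only [map_mul, map_add, map_pow, map_one, map_ofNat] at h
  apply mul_right_cancel₀ (b := expI ^ 2 + 1) (ne_of_apply_ne constantCoeff (by
    simp [constantCoeff_expI, one_add_one_eq_two]))
  linear_combination expI ^ 2 * h - secantEGF_zero_mul -
    (rescale (-1) (secantEGF 0) * (rescale (-1) expI * expI + 1) - 2 * expI) *
      rescale_neg_one_expI_mul_expI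

theorem secantEGF_zero_sq : secantEGF 0 ^ 2 = 1 + tangentEGF 0 ^ 2 := by
  apply mul_right_cancel₀ (b := (expI ^ 2 + 1) ^ 2) (ne_of_apply_ne constantCoeff (by
    simp [constantCoeff_expI, one_add_one_eq_two]))
  linear_combination (secantEGF 0 * (expI ^ 2 + 1) + 2 * expI) * secantEGF_zero_mul +
    (ι * tangentEGF 0 * (expI ^ 2 + 1) + expI ^ 2 - 1) * C_I_mul_tangentEGF_zero_mul -
    tangentEGF 0 ^ 2 * (expI ^ 2 + 1) ^ 2 * C_I_mul_C_I

theorem rescale_two_tangentEGF_zero_mul :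
    rescale 2 (tangentEGF 0) * (1 - tangentEGF 0 ^ 2) = 2 * tangentEGF 0 := by
  have h := congrArg (rescale (2 : ℂ)) C_I_mul_tangentEGF_zero_mul
  simp only [map_mul, map_add, map_sub, map_pow, map_one, rescale_C, rescale_two_expI] at h
  apply mul_right_cancel₀ (b := ι * (expI ^ 2 + 1) ^ 2) (ne_of_apply_ne constantCoeff (by
    simp [constantCoeff_expI, one_add_one_eq_two]))
  linear_combination 2 * h +
    (ι * rescale 2 (tangentEGF 0) * (ι * tangentEGF 0 * (expI ^ 2 + 1) + expI ^ 2 - 1) -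
      2 * (expI ^ 2 + 1)) * C_I_mul_tangentEGF_zero_mul -
    ι * rescale 2 (tangentEGF 0) * tangentEGF 0 ^ 2 * (expI ^ 2 + 1) ^ 2 * C_I_mul_C_I

noncomputable def xCot : ℂ⟦X⟧ := rescale (2 * Complex.I) (bernoulliPowerSeries ℂ) + ι * X

noncomputable def xCsc : ℂ⟦X⟧ :=
  2 * rescale Complex.I (bernoulliPowerSeries ℂ) - rescale (2 * Complex.I) (bernoulliPowerSeries ℂ)

theorem rescale_I_bernoulliPowerSeries_mul :
    rescale Complex.I (bernoulliPowerSeries ℂ) * (expI - 1) = ι * X := by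
  simpa only [expI, map_mul, map_sub, map_one, rescale_X] using
    congrArg (rescale Complex.I) (bernoulliPowerSeries_mul_exp_sub_one ℂ)

theorem rescale_two_I_bernoulliPowerSeries_mul :
    rescale (2 * Complex.I) (bernoulliPowerSeries ℂ) * (expI ^ 2 - 1) = 2 * ι * X := by
  simpa only [map_mul, map_sub, map_one, rescale_X, ← expI_sq, map_ofNat] using
    congrArg (rescale (2 * Complex.I)) (bernoulliPowerSeries_mul_exp_sub_one ℂ)

theorem xCot_mul_tangentEGF_zero : xCot * tangentEGF 0 = X := by
  apply mul_right_cancel₀ C_I_mul_expI_sq_add_one_ne_zero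
  rw [xCot]
  linear_combination (rescale (2 * Complex.I) (bernoulliPowerSeries ℂ) + ι * X) *
    C_I_mul_tangentEGF_zero_mul + rescale_two_I_bernoulliPowerSeries_mul

theorem xCsc_mul_tangentEGF_zero : xCsc * tangentEGF 0 = X * secantEGF 0 := by
  apply mul_right_cancel₀ C_I_mul_expI_sq_add_one_ne_zero
  rw [xCsc]
  linear_combination (2 * rescale Complex.I (bernoulliPowerSeries ℂ) -
      rescale (2 * Complex.I) (bernoulliPowerSeries ℂ)) * C_I_mul_tangentEGF_zero_mul +
    2 * (expI + 1) * rescale_I_bernoulliPowerSeries_mul -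
    rescale_two_I_bernoulliPowerSeries_mul - ι * X * secantEGF_zero_mul

theorem xCsc_eq_egf :
    xCsc = egf fun k => (2 * Complex.I ^ k - (2 * Complex.I) ^ k) * (bernoulli k : ℂ) := by
  ext k
  simp only [xCsc, bernoulliPowerSeries_eq_egf, rescale_egf, map_sub, coeff_egf, eq_ratCast]
  rw [show (2 : ℂ⟦X⟧) = C 2 from (map_ofNat C 2).symm, coeff_C_mul, coeff_egf]
  simp only [Rat.smul_def]
  ring

theorem two_X_mul_rescale_two_tangentEGF_zero :
    2 * X * rescale 2 (tangentEGF 0) =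
      (secantEGF 1 + rescale (-1) (secantEGF 1)) * xCsc - 2 * xCot := by
  have hS : secantEGF 1 * (1 - tangentEGF 0) = secantEGF 0 := by
    simpa using secantEGF_mul_one_sub 1
  have hS' : rescale (-1) (secantEGF 1) * (1 + tangentEGF 0) = secantEGF 0 := by
    simpa [rescale_neg_one_tangentEGF_zero, rescale_neg_one_secantEGF_zero, sub_eq_add_neg] using
      congrArg (rescale (-1 : ℂ)) hS
  apply mul_right_cancel₀ (b := tangentEGF 0 * (1 - tangentEGF 0 ^ 2))
  · refine mul_ne_zero tangentEGF_zero_ne_zero (ne_of_apply_ne constantCoeff ?_)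
    simp [constantCoeff_tangentEGF]
  linear_combination 2 * X * tangentEGF 0 * rescale_two_tangentEGF_zero_mul -
    2 * secantEGF 0 * xCsc_mul_tangentEGF_zero -
    ((1 + tangentEGF 0) * hS + (1 - tangentEGF 0) * hS') * xCsc * tangentEGF 0 +
    2 * (1 - tangentEGF 0 ^ 2) * xCot_mul_tangentEGF_zero - 2 * X * secantEGF_zero_sq

theorem two_mul_tangent_eq_sum_antidiagonal (n : ℕ) :
    2 * ((2 * n + 2) * (2 ^ (2 * n + 1) * (((P (2 * n + 1)).eval 0 : ℚ) : ℂ))) =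
      ∑ ij ∈ antidiagonal (2 * n + 2), (2 * n + 2).choose ij.1 •
        ((1 + (-1) ^ ij.1) * (((Q ij.1).eval 1 : ℚ) : ℂ) *
          ((2 * Complex.I ^ ij.2 - (2 * Complex.I) ^ ij.2) * (bernoulli ij.2 : ℂ))) -
      2 * ((2 * Complex.I) ^ (2 * n + 2) * (bernoulli (2 * n + 2) : ℂ)) := by
  have h := congrArg (coeff (2 * n + 2)) two_X_mul_rescale_two_tangentEGF_zero
  have two : (2 : ℂ⟦X⟧) = C 2 := (map_ofNat C 2).symm
  rw [secantEGF_add_rescale_neg_one, xCsc_eq_egf, egf_mul, xCot, bernoulliPowerSeries_eq_egf,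
    rescale_egf, two, mul_assoc, tangentEGF, rescale_egf, X_mul_egf] at h
  simp only [coeff_C_mul, map_sub, map_add, coeff_egf, coeff_X, eq_ratCast, Rat.smul_def,
    if_neg (show 2 * n + 2 ≠ 1 by omega), mul_zero, add_zero,
    show 2 * n + 2 - 1 = 2 * n + 1 by omega] at h
  apply mul_left_cancel₀
    (inv_ne_zero (show ((2 * n + 2)! : ℂ) ≠ 0 from mod_cast (2 * n + 2).factorial_ne_zero))
  push_cast at h ⊢
  linear_combination h

end PowerSeries

theorem sum_range_two_mul_add_one_of_odd {M : Type*} [AddCommMonoid M] (f : ℕ → M) (m : ℕ)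
    (hodd : ∀ u < m, f (2 * u + 1) = 0) :
    ∑ k ∈ range (2 * m + 1), f k = ∑ u ∈ range (m + 1), f (2 * u) := by
  induction m with
  | zero => simp
  | succ m ih =>
    rw [show 2 * (m + 1) + 1 = 2 * m + 1 + 1 + 1 by ring, sum_range_succ, sum_range_succ,
      ih fun u hu => hodd u (by omega), hodd m (by omega), add_zero, sum_range_succ (n := m + 1),
      mul_add_one]

theorem sum_antidiagonal_reduce_to_even (n : ℕ) (s b : ℕ → ℂ) :
    ∑ ij ∈ antidiagonal (2 * n + 2), (2 * n + 2).choose ij.1 •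
        ((1 + (-1) ^ ij.1) * s ij.1 * ((2 * Complex.I ^ ij.2 - (2 * Complex.I) ^ ij.2) * b ij.2)) =
      2 * (s (2 * n + 2) * b 0 + ∑ i ∈ range (n + 1),
        ((2 * n + 2).choose (2 * i + 2) : ℂ) * (-1) ^ (i + 2) * (4 ^ (i + 1) - 2) *
          b (2 * i + 2) * s (2 * n - 2 * i)) := by
  rw [← Nat.sum_antidiagonal_swap]
  simp only [Prod.fst_swap, Prod.snd_swap]
  rw [Nat.sum_antidiagonal_eq_sum_range_succ (fun j i => (2 * n + 2).choose i •
      ((1 + (-1) ^ i) * s i * ((2 * Complex.I ^ j - (2 * Complex.I) ^ j) * b j))),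
    show (2 * n + 2).succ = 2 * (n + 1) + 1 by omega, sum_range_two_mul_add_one_of_odd]
  · rw [sum_range_succ', mul_add, add_comm, mul_sum]
    congr 1
    · simp only [mul_zero, Nat.sub_zero, Nat.choose_self, pow_zero, one_smul,
        (show Even (2 * n + 2) from ⟨n + 1, by ring⟩).neg_one_pow]
      ring
    · refine sum_congr rfl fun i hi => ?_
      have hi : i ≤ n := Nat.lt_succ_iff.mp (mem_range.mp hi)
      rw [show 2 * n + 2 - 2 * (i + 1) = 2 * (n - i) by omega,
        Nat.choose_symm_of_eq_add (show 2 * n + 2 = 2 * (n - i) + (2 * i + 2) by omega)]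
      rw [mul_pow, pow_mul Complex.I, Complex.I_sq, pow_mul, pow_mul, neg_one_sq, one_pow,
        show 2 * (n - i) = 2 * n - 2 * i by omega, show 2 * (i + 1) = 2 * i + 2 by ring,
        nsmul_eq_mul]
      norm_num
      ring
  · intro u hu
    rw [(show Odd (2 * n + 2 - (2 * u + 1)) from ⟨n - u, by omega⟩).neg_one_pow, add_neg_cancel,
      zero_mul, zero_mul, smul_zero]

theorem tangent_eq_sum_springer_bernoulli (n : ℕ) :
    (2 * n + 2 : ℚ) * 2 ^ (2 * n + 1) * E (2 * n + 1) =
      s (2 * n + 2) +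
        (∑ i ∈ Finset.range (n + 1),
          ((2 * n + 2).choose (2 * i + 2) : ℚ) * (-1) ^ (i + 2) * (4 ^ (i + 1) - 2) *
            _root_.bernoulli (2 * i + 2) * s (2 * n - 2 * i)) -
        (-4) ^ (n + 1) * _root_.bernoulli (2 * n + 2) := by
  have h := PowerSeries.two_mul_tangent_eq_sum_antidiagonal n
  have hI : (2 * Complex.I) ^ (2 * n + 2) = (-4) ^ (n + 1) := by
    rw [show 2 * n + 2 = 2 * (n + 1) by ring, pow_mul, mul_pow, Complex.I_sq]
    norm_num
  rw [sum_antidiagonal_reduce_to_even n (fun k => (((Q k).eval 1 : ℚ) : ℂ))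
    (fun k => (_root_.bernoulli k : ℂ)), _root_.bernoulli_zero, hI] at h
  have hE : E (2 * n + 1) = (P (2 * n + 1)).eval 0 := if_neg (Nat.not_even_two_mul_add_one n)
  apply Rat.cast_injective (α := ℂ)
  push_cast [hE, s]
  linear_combination h / 2
end
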